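/- Let n, m ≥ 1 and λ ∈ (0, 1). Set N_λ := V⁻¹({λ}) and N₀ := V⁻¹({0}), with the metrics inherited from 𝕋ⁿ × ℝᵐ. Then there exist a constant K ≥ 0 and a K-Lipschitz map Φ : N_λ → N₀ such that for every point (x, z) ∈ N_λ with ∏_{j=1}^{n} (1 + cos x_j)/2 = 0 (equivalently, (x, 0) ∈ N₀ and ‖z‖² = λ), one has Φ(x, z) = (x, 0). -/

import Mathlib

/-!
On `N_λ` we have `∏ⱼ (1 + cos xⱼ)/2 ≤ λ`, so some coordinate lies within
`a = arccos (1 - 2 λ^{1/n}) < π` of `π`. Let `t(x)` be the distance to `π` of the coordinate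
nearest to it; `t` is 1-Lipschitz. Moving every coordinate towards `π` by `t(x)`, but by at most
`k` times its distance to the antipode `0` (with `k = π / (π - a)`), sends the nearest coordinate
exactly to `π`, fixes the points with some `xⱼ = π` (where `t = 0`), and is Lipschitz on the
torus. Then `Φ(x, z) = (σ x, 0)` for this map `σ`.
-/

open scoped NNReal
open Real

namespace Real.Angle

theorem norm_coe_of_abs_le_pi {x : ℝ} (hx : |x| ≤ π) : ‖(x : Angle)‖ = |x| :=
  (AddCircle.norm_coe_eq_abs_iff (2 * π) two_pi_pos.ne').2 <| by
    rwa [abs_of_pos two_pi_pos, mul_div_cancel_left₀ _ two_ne_zero]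

theorem norm_coe_le_abs (x : ℝ) : ‖(x : Angle)‖ ≤ |x| :=
  QuotientAddGroup.norm_mk_le_norm (S := AddSubgroup.zmultiples (2 * π))

theorem norm_eq_abs_toReal (θ : Angle) : ‖θ‖ = |θ.toReal| := by
  conv_lhs => rw [← θ.coe_toReal]
  exact norm_coe_of_abs_le_pi θ.abs_toReal_le_pi

theorem norm_le_pi (θ : Angle) : ‖θ‖ ≤ π :=
  θ.norm_eq_abs_toReal ▸ θ.abs_toReal_le_pi

theorem cos_eq_neg_cos_norm_sub_pi (θ : Angle) : cos θ = -Real.cos ‖θ - π‖ := by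
  rw [norm_eq_abs_toReal, Real.cos_abs, cos_toReal, cos_sub_pi, neg_neg]

theorem cos_eq_neg_one_iff {θ : Angle} : cos θ = -1 ↔ θ = π := by
  rw [← Real.cos_pi, ← cos_coe, cos_eq_iff_eq_or_eq_neg, neg_coe_pi, or_self]

theorem norm_sub_pi_le_arccos {θ : Angle} {l : ℝ} (h : (1 + cos θ) / 2 ≤ l) :
    ‖θ - π‖ ≤ arccos (1 - 2 * l) := by
  rw [cos_eq_neg_cos_norm_sub_pi] at h
  calc ‖θ - π‖ = arccos (Real.cos ‖θ - π‖) := (arccos_cos (norm_nonneg _) (norm_le_pi _)).symm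
    _ ≤ arccos (1 - 2 * l) := arccos_le_arccos (by linarith)

end Real.Angle

open Real.Angle in
theorem LipschitzOnWith.lipschitzWith_comp_toReal {E : Type*} [PseudoMetricSpace E] {K : ℝ≥0}
    {f : ℝ → E} (hf : LipschitzOnWith K f (Set.Icc (-π) π)) (hπ : f (-π) = f π) :
    LipschitzWith K (fun θ : Angle => f θ.toReal) := by
  have mem : ∀ θ : Angle, θ.toReal ∈ Set.Icc (-π) π := fun θ =>
    ⟨θ.neg_pi_lt_toReal.le, θ.toReal_le_pi⟩
  refine LipschitzWith.of_dist_le_mul fun θ ψ => ?_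
  wlog hle : ψ.toReal ≤ θ.toReal generalizing θ ψ
  · rw [dist_comm, dist_comm θ]; exact this ψ θ (le_of_not_ge hle)
  set u := θ.toReal
  set v := ψ.toReal
  have hdist : dist θ ψ = ‖((u - v : ℝ) : Angle)‖ := by
    rw [dist_eq_norm, coe_sub, coe_toReal, coe_toReal]
  have hu : u ∈ Set.Icc (-π) π := mem θ
  have hv : v ∈ Set.Icc (-π) π := mem ψ
  rcases le_or_gt (u - v) π with hnear | hfar
  · rw [hdist, norm_coe_of_abs_le_pi (by rw [abs_of_nonneg (sub_nonneg.2 hle)]; exact hnear),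
      ← Real.dist_eq]
    exact hf.dist_le_mul u hu v hv
  · -- the short arc from `θ` to `ψ` passes through the antipode `π = -π`
    have hwrap : dist θ ψ = (π - u) + (v + π) := by
      rw [hdist, ← sub_zero ((u - v : ℝ) : Angle), ← coe_two_pi, ← coe_sub,
        norm_coe_of_abs_le_pi (by rw [abs_le]; constructor <;> linarith [hu.2, hv.1]),
        abs_of_nonpos (by linarith [hu.2, hv.1])]
      ring
    have hright := hf.dist_le_mul u hu π ⟨by linarith [pi_pos], le_rfl⟩
    have hleft := hf.dist_le_mul (-π) ⟨le_rfl, by linarith [pi_pos]⟩ v hv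
    rw [Real.dist_eq, abs_of_nonpos (by linarith [hu.2])] at hright
    rw [Real.dist_eq, abs_of_nonpos (by linarith [hv.1])] at hleft
    calc dist (f u) (f v) ≤ dist (f u) (f π) + dist (f (-π)) (f v) := by
          rw [hπ]; exact dist_triangle _ _ _
      _ ≤ K * (-(u - π)) + K * (-(-π - v)) := add_le_add hright hleft
      _ = K * dist θ ψ := by rw [hwrap]; ring

def clampSymm (c u : ℝ) : ℝ := max (-c) (min c u)

theorem abs_clampSymm_sub_clampSymm_le (c c' u v : ℝ) :
    |clampSymm c u - clampSymm c' v| ≤ max |c - c'| |u - v| := by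
  refine (abs_max_sub_max_le_max _ _ _ _).trans (max_le ?_ (abs_min_sub_min_le_max _ _ _ _))
  rw [neg_sub_neg, abs_sub_comm]
  exact le_max_left _ _

theorem clampSymm_of_abs_le {c u : ℝ} (h : |u| ≤ c) : clampSymm c u = u := by
  rw [clampSymm, min_eq_right ((le_abs_self u).trans h),
    max_eq_right (neg_le.1 ((neg_le_abs u).trans h))]

theorem clampSymm_of_nonpos {c : ℝ} (h : c ≤ 0) (u : ℝ) : clampSymm c u = -c :=
  max_eq_left ((min_le_left _ _).trans (by linarith))

/-- How far a coordinate at offset `u ∈ [-π, π]` from `π` is moved back towards `π`. The cap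
`k (π - |u|)` vanishes at the antipode `u = ±π`, where `toReal` jumps, which is what makes the
retraction Lipschitz on the circle. -/
noncomputable def retractStep (k : ℝ≥0) (t u : ℝ) : ℝ := clampSymm (min t (k * (π - |u|))) u

theorem retractStep_zero (k : ℝ≥0) {u : ℝ} (hu : |u| ≤ π) : retractStep k 0 u = 0 := by
  rw [retractStep, min_eq_left (by positivity), clampSymm_of_nonpos le_rfl, neg_zero]

theorem retractStep_neg_pi (k : ℝ≥0) (t : ℝ) : retractStep k t (-π) = retractStep k t π := by
  have hcap : min t (k * (π - |π|)) ≤ 0 := by simp [abs_of_pos pi_pos]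
  rw [retractStep, retractStep, abs_neg, clampSymm_of_nonpos hcap, clampSymm_of_nonpos hcap]

theorem retractStep_of_abs_le {k : ℝ≥0} {t u : ℝ} (ht : |u| ≤ t) (hk : |u| ≤ k * (π - |u|)) :
    retractStep k t u = u :=
  clampSymm_of_abs_le (le_min ht hk)

theorem lipschitzWith_retractStep (k : ℝ≥0) (t : ℝ) :
    LipschitzWith (max k 1) (retractStep k t) := by
  refine LipschitzWith.of_dist_le_mul fun u v => ?_
  have hcap : |min t (k * (π - |u|)) - min t (k * (π - |v|))| ≤ k * |u - v| := by
    refine (abs_min_sub_min_le_max _ _ _ _).trans (max_le (by simp; positivity) ?_)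
    rw [← mul_sub, abs_mul, NNReal.abs_eq, sub_sub_sub_cancel_left]
    exact mul_le_mul_of_nonneg_left (abs_abs_sub_abs_le_abs_sub v u |>.trans_eq (abs_sub_comm _ _))
      k.2
  rw [Real.dist_eq, Real.dist_eq, NNReal.coe_max, NNReal.coe_one]
  refine (abs_clampSymm_sub_clampSymm_le _ _ _ _).trans (max_le ?_ ?_)
  · exact hcap.trans (mul_le_mul_of_nonneg_right (le_max_left _ _) (abs_nonneg _))
  · exact le_mul_of_one_le_left (abs_nonneg _) (le_max_right _ _)

theorem abs_retractStep_sub_retractStep_le (k : ℝ≥0) (t s u : ℝ) :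
    |retractStep k t u - retractStep k s u| ≤ |t - s| := by
  refine (abs_clampSymm_sub_clampSymm_le _ _ _ _).trans (max_le ?_ (by simp))
  simpa using abs_min_sub_min_le_max t (k * (π - |u|)) s (k * (π - |u|))

theorem exists_le_of_prod_le_pow_card {ι : Type*} [Fintype ι] [Nonempty ι] {f : ι → ℝ} {l : ℝ}
    (hl : 0 < l) (h : ∏ i, f i ≤ l ^ Fintype.card ι) : ∃ i, f i ≤ l := by
  by_contra! hlt
  have := Finset.prod_lt_prod_of_nonempty (fun _ _ => hl) (fun i _ => hlt i) Finset.univ_nonempty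
  rw [Finset.prod_const, Finset.card_univ] at this
  linarith

section RetractToPi

open Real.Angle

variable {ι : Type*}

noncomputable def distToPi (x : ι → Angle) : ℝ := ⨅ j, ‖x j - π‖

noncomputable def retractToPi (k : ℝ≥0) (x : ι → Angle) : ι → Angle :=
  fun j => x j - (retractStep k (distToPi x) (x j - π).toReal : Angle)

theorem distToPi_nonneg (x : ι → Angle) : 0 ≤ distToPi x :=
  Real.iInf_nonneg fun _ => norm_nonneg _

theorem distToPi_le [Finite ι] (x : ι → Angle) (j : ι) : distToPi x ≤ ‖x j - π‖ :=
  ciInf_le (Set.finite_range _).bddBelow j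

theorem lipschitzWith_distToPi [Fintype ι] [Nonempty ι] :
    LipschitzWith 1 (distToPi (ι := ι)) := by
  refine LipschitzWith.of_le_add fun x y => ?_
  obtain ⟨j, hj⟩ := exists_eq_ciInf_of_finite (f := fun j => ‖y j - π‖)
  calc distToPi x ≤ ‖x j - π‖ := distToPi_le x j
    _ ≤ ‖y j - π‖ + ‖(x j - π) - (y j - π)‖ := norm_le_norm_add_norm_sub' _ _
    _ ≤ distToPi y + dist x y := by
      rw [sub_sub_sub_cancel_right, hj]
      exact add_le_add le_rfl ((dist_eq_norm (x j) (y j)).symm.trans_le (dist_le_pi_dist x y j))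

theorem retractToPi_eq_self [Finite ι] (k : ℝ≥0) {x : ι → Angle} (h : ∃ j, x j = π) :
    retractToPi k x = x := by
  obtain ⟨j, hj⟩ := h
  have hdist : distToPi x = 0 :=
    le_antisymm ((distToPi_le x j).trans_eq (by rw [hj, sub_self, norm_zero]))
      (distToPi_nonneg x)
  funext i
  rw [retractToPi, hdist, retractStep_zero k (abs_toReal_le_pi _), coe_zero, sub_zero]

theorem exists_retractToPi_eq_pi [Finite ι] {k : ℝ≥0} {a : ℝ} (ha : a ≤ k * (π - a))
    {x : ι → Angle} (h : ∃ j, ‖x j - π‖ ≤ a) : ∃ j, retractToPi k x j = π := by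
  obtain ⟨j, hj⟩ := h
  have : Nonempty ι := ⟨j⟩
  obtain ⟨i, hi⟩ := exists_eq_ciInf_of_finite (f := fun j => ‖x j - π‖)
  have hia : |(x i - π).toReal| ≤ a := by
    rw [← norm_eq_abs_toReal]; exact (hi.trans_le (distToPi_le x j)).trans hj
  refine ⟨i, ?_⟩
  rw [retractToPi, retractStep_of_abs_le, coe_toReal, sub_sub_cancel]
  · rw [← norm_eq_abs_toReal]; exact hi.le
  · exact hia.trans (ha.trans (by gcongr))

theorem lipschitzWith_retractToPi [Fintype ι] [Nonempty ι] (k : ℝ≥0) :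
    LipschitzWith (max k 1 + 2) (retractToPi (ι := ι) k) := by
  refine LipschitzWith.of_dist_le_mul fun x y => (dist_pi_le_iff (by positivity)).2 fun j => ?_
  set s := retractStep k (distToPi x) (x j - π).toReal
  set s' := retractStep k (distToPi y) (y j - π).toReal
  have hstep : |s - retractStep k (distToPi x) (y j - π).toReal| ≤ max k 1 * dist (x j) (y j) := by
    rw [← dist_sub_right (x j) (y j) π, ← Real.dist_eq]
    exact ((lipschitzWith_retractStep k _).lipschitzOnWith.lipschitzWith_comp_toReal
      (retractStep_neg_pi k _)).dist_le_mul _ _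
  have hdist : |distToPi x - distToPi y| ≤ dist x y := by
    simpa [Real.dist_eq] using lipschitzWith_distToPi.dist_le_mul x y
  have hss' : |s - s'| ≤ max k 1 * dist x y + dist x y :=
    (abs_sub_le _ _ _).trans (add_le_add
      (hstep.trans (by gcongr; exact dist_le_pi_dist x y j))
      ((abs_retractStep_sub_retractStep_le _ _ _ _).trans hdist))
  calc dist (retractToPi k x j) (retractToPi k y j)
      ≤ dist (x j) (y j) + dist (s : Angle) s' := dist_sub_sub_le _ _ _ _
    _ ≤ dist x y + |s - s'| :=
      add_le_add (dist_le_pi_dist x y j) (by rw [dist_eq_norm, ← coe_sub]; exact norm_coe_le_abs _)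
    _ ≤ (max k 1 + 2) * dist x y := by push_cast at hss' ⊢; linarith

theorem prod_retractToPi_eq_zero [Fintype ι] [Nonempty ι] {k : ℝ≥0} {l : ℝ} (hl : 0 < l)
    (hk : arccos (1 - 2 * l) ≤ k * (π - arccos (1 - 2 * l))) {x : ι → Angle}
    (h : ∏ j, (1 + cos (x j)) / 2 ≤ l ^ Fintype.card ι) :
    ∏ j, (1 + cos (retractToPi k x j)) / 2 = 0 := by
  obtain ⟨i, hi⟩ := exists_le_of_prod_le_pow_card hl h
  obtain ⟨j, hj⟩ := exists_retractToPi_eq_pi hk ⟨i, norm_sub_pi_le_arccos hi⟩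
  exact Finset.prod_eq_zero (Finset.mem_univ j) (by rw [hj, cos_eq_neg_one_iff.2 rfl]; norm_num)

theorem exists_eq_pi_of_prod_eq_zero [Fintype ι] {x : ι → Angle}
    (h : ∏ j, (1 + cos (x j)) / 2 = 0) : ∃ j, x j = π := by
  obtain ⟨j, -, hj⟩ := Finset.prod_eq_zero_iff.1 h
  exact ⟨j, cos_eq_neg_one_iff.1 (by linarith)⟩

end RetractToPi

theorem stmt_9_general (n m : ℕ) (hn : 1 ≤ n) (lam : ℝ) (hlam0 : 0 < lam) (hlam1 : lam < 1)
    (V : (Fin n → Real.Angle) × (EuclideanSpace ℝ (Fin m)) → ℝ)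
    (hV : ∀ p, V p = (∏ j, (1 + Real.Angle.cos (p.1 j)) / 2) + ‖p.2‖ ^ 2) :
    ∃ (K : ℝ≥0) (Φ : (V ⁻¹' {lam}) → (V ⁻¹' {0})),
      LipschitzWith K Φ ∧
      ∀ p : V ⁻¹' {lam}, (∏ j, (1 + Real.Angle.cos (p.1.1 j)) / 2) = 0 →
        ((Φ p).1 : (Fin n → Real.Angle) × (EuclideanSpace ℝ (Fin m))) = (p.1.1, 0) := by
  have : Nonempty (Fin n) := Fin.pos_iff_nonempty.mp hn
  set l := lam ^ (n⁻¹ : ℝ)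
  have hl : 0 < l ∧ l < 1 :=
    ⟨rpow_pos_of_pos hlam0 _, rpow_lt_one hlam0.le hlam1 (by positivity)⟩
  have hln : l ^ Fintype.card (Fin n) = lam := by
    rw [Fintype.card_fin]; exact rpow_inv_natCast_pow hlam0.le (by omega)
  set a := arccos (1 - 2 * l)
  have ha : a < π := arccos_lt_pi.2 (by linarith)
  set k : ℝ≥0 := (π / (π - a)).toNNReal
  have hk : a ≤ k * (π - a) := by
    rw [Real.coe_toNNReal _ (div_nonneg pi_pos.le (by linarith)),
      div_mul_cancel₀ _ (by linarith)]
    exact arccos_le_pi _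
  have hmaps : ∀ p : V ⁻¹' {lam}, V (retractToPi k p.1.1, 0) = 0 := fun ⟨p, hp⟩ => by
    have hprod : ∏ j, (1 + Real.Angle.cos (p.1 j)) / 2 ≤ l ^ Fintype.card (Fin n) := by
      rw [hln, ← hp, hV p]; exact le_add_of_nonneg_right (sq_nonneg _)
    rw [hV, norm_zero, zero_pow two_ne_zero, add_zero]
    exact prod_retractToPi_eq_zero hl.1 hk hprod
  refine ⟨max k 1 + 2, fun p => ⟨(retractToPi k p.1.1, 0), hmaps p⟩, ?_, fun p hp => ?_⟩
  · have hfst := LipschitzWith.prod_fst.comp (LipschitzWith.subtype_val (V ⁻¹' {lam}))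
    have h := (((LipschitzWith.prodMk_right 0).comp (lipschitzWith_retractToPi k)).comp
      hfst).subtype_mk (p := (· ∈ V ⁻¹' {0})) hmaps
    rwa [one_mul, mul_one, mul_one] at h
  · show (retractToPi k p.1.1, 0) = _
    rw [retractToPi_eq_self k (exists_eq_pi_of_prod_eq_zero hp)]

/-- Let `V(x, z) = ∏ⱼ (1 + cos xⱼ)/2 + ‖z‖²` on `𝕋ⁿ × ℝᵐ` with `𝕋 = ℝ/2πℤ`.
For `λ ∈ (0, 1)`, there is a Lipschitz map `Φ : N_λ = V⁻¹({λ}) → N₀ = V⁻¹({0})`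
such that `Φ(x, z) = (x, 0)` whenever `(x, z) ∈ N_λ` satisfies `∏ⱼ (1 + cos xⱼ)/2 = 0`. -/
theorem stmt_9 (n m : ℕ) (hn : 1 ≤ n) (hm : 1 ≤ m) (lam : ℝ) (hlam0 : 0 < lam) (hlam1 : lam < 1)
    (V : (Fin n → Real.Angle) × (EuclideanSpace ℝ (Fin m)) → ℝ)
    (hV : ∀ p, V p = (∏ j, (1 + Real.Angle.cos (p.1 j)) / 2) + ‖p.2‖ ^ 2) :
    ∃ (K : ℝ≥0) (Φ : (V ⁻¹' {lam}) → (V ⁻¹' {0})),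
      LipschitzWith K Φ ∧
      ∀ p : V ⁻¹' {lam}, (∏ j, (1 + Real.Angle.cos (p.1.1 j)) / 2) = 0 →
        ((Φ p).1 : (Fin n → Real.Angle) × (EuclideanSpace ℝ (Fin m))) = (p.1.1, 0) :=
  stmt_9_general n m hn lam hlam0 hlam1 V hV
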